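/- arXiv:1911.08817 — 5 statements merged into one kernel-verified Lean document; each statement's English description precedes it below -/
import Mathlib

section
/- Any strict local minimum x* of a function g(x) = Σ_{k=1}^D c_k · max(0, w_k^T x + b_k) on R^d lies at a point where z_k(x*) = w_k^T x* + b_k = 0 for d linearly independent linear functions z_k. -/
set_option maxHeartbeats 1000000

/-- Any strict local minimum of `g x = ∑ k, c k * max 0 (⟨w k, x⟩ + b k)` lies at a point
where `z_k(x*) = 0` for `d` linearly independent `z_k` (i.e. linearly independent `w k`). -/
theorem strict_local_min_relu_model (d D : ℕ)
    (w : Fin D → Fin d → ℝ) (b c : Fin D → ℝ)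
    (g : (Fin d → ℝ) → ℝ)
    (hg : ∀ x, g x = ∑ k, c k * max 0 (∑ i, w k i * x i + b k))
    (xs : Fin d → ℝ)
    (hmin : ∃ U ∈ nhds xs, ∀ x ∈ U, x ≠ xs → g xs < g x) :
    ∃ s : Finset (Fin D), s.card = d ∧
      LinearIndependent ℝ (fun k : s => w k) ∧
      ∀ k ∈ s, ∑ i, w k i * xs i + b k = 0 := by
  classical
  obtain ⟨U, hU, hUmin⟩ := hmin
  set z : Fin D → ℝ := fun k => ∑ i, w k i * xs i + b k with hzdef
  set E := EuclideanSpace ℝ (Fin d) with hE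
  set W : Fin D → E := fun k => (WithLp.toLp 2 (w k) : E) with hW
  set S : Set (Fin D) := {k | z k = 0} with hS
  obtain ⟨δ, hδ, hball⟩ := Metric.mem_nhds_iff.mp hU
  -- Step 1: the active gradients span everything
  have hspan : Submodule.span ℝ (W '' S) = ⊤ := by
    by_contra hne
    have hbot : (Submodule.span ℝ (W '' S))ᗮ ≠ ⊥ :=
      fun h => hne (Submodule.orthogonal_eq_bot_iff.mp h)
    obtain ⟨v, hvmem, hv0⟩ := (Submodule.ne_bot_iff _).mp hbot
    have hv : ∀ k ∈ S, ∑ i, w k i * v i = 0 := by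
      intro k hk
      have := (Submodule.mem_orthogonal _ _).mp hvmem (W k)
        (Submodule.subset_span ⟨k, hk, rfl⟩)
      have h' : inner ℝ (WithLp.toLp 2 (w k) : EuclideanSpace ℝ (Fin d)) (v : EuclideanSpace ℝ (Fin d)) = 0 := this
      simpa [PiLp.inner_apply, RCLike.inner_apply, mul_comm] using h'
    set vf : Fin d → ℝ := v.ofLp with hvf
    have hvf0 : vf ≠ 0 := by rw [hvf, Ne, WithLp.ofLp_eq_zero]; exact hv0
    set m : Fin D → ℝ := fun k => ∑ i, w k i * vf i with hm
    set L : ℝ := ∑ k, c k * (if 0 < z k then m k else 0) with hL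
    -- choose epsilon controlling sign stability
    set εf : Fin D → ℝ := fun k => if z k = 0 then 1 else |z k| / (|m k| + 1) with hεf
    have hεfpos : ∀ k, 0 < εf k := by
      intro k
      by_cases h : z k = 0
      · simp only [hεf, if_pos h]; norm_num
      · simp only [hεf, if_neg h]; exact div_pos (abs_pos.mpr h) (by positivity)
    set F : Finset ℝ := insert (1 : ℝ) (Finset.image εf Finset.univ) with hF
    have hFne : F.Nonempty := ⟨1, Finset.mem_insert_self _ _⟩
    set ε : ℝ := F.min' hFne with hε
    have hεpos : 0 < ε := by
      have hall : ∀ x ∈ F, 0 < x := by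
        intro x hx
        rcases Finset.mem_insert.mp hx with h | h
        · rw [h]; norm_num
        · obtain ⟨k, _, hk⟩ := Finset.mem_image.mp h
          rw [← hk]; exact hεfpos k
      exact hall _ (F.min'_mem hFne)
    have hεle : ∀ k, ε ≤ εf k := fun k =>
      F.min'_le _ (Finset.mem_insert_of_mem (Finset.mem_image_of_mem _ (Finset.mem_univ k)))
    -- the key affine formula
    have key : ∀ t : ℝ, |t| < ε → g (xs + t • vf) = g xs + t * L := by
      intro t ht
      have hterm : ∀ k, c k * max 0 (z k + t * m k)
          = c k * max 0 (z k) + t * (c k * (if 0 < z k then m k else 0)) := by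
        intro k
        rcases lt_trichotomy (z k) 0 with h | h | h
        · have hεk : ε ≤ |z k| / (|m k| + 1) := by
            have := hεle k; simpa only [hεf, if_neg (ne_of_lt h)] using this
          have hsmall : |t * m k| < |z k| := by
            calc |t * m k| = |t| * |m k| := abs_mul _ _
              _ ≤ |t| * (|m k| + 1) := by nlinarith [abs_nonneg t, abs_nonneg (m k)]
              _ < (|z k| / (|m k| + 1)) * (|m k| + 1) := by
                  apply mul_lt_mul_of_pos_right (lt_of_lt_of_le ht hεk) (by positivity)
              _ = |z k| := by field_simp
          have h1 : z k + t * m k < 0 := by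
            have := neg_abs_le (t * m k)
            have habs : |z k| = -z k := abs_of_neg h
            linarith [lt_of_le_of_lt (le_abs_self (t * m k)) hsmall,
              neg_lt_of_abs_lt hsmall]
          rw [max_eq_left (le_of_lt h1), max_eq_left (le_of_lt h), if_neg (not_lt.mpr (le_of_lt h))]
          ring
        · have hm0 : m k = 0 := hv k h
          simp [h, hm0]
        · have hεk : ε ≤ |z k| / (|m k| + 1) := by
            have := hεle k; simpa only [hεf, if_neg (ne_of_gt h)] using this
          have hsmall : |t * m k| < |z k| := by
            calc |t * m k| = |t| * |m k| := abs_mul _ _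
              _ ≤ |t| * (|m k| + 1) := by nlinarith [abs_nonneg t, abs_nonneg (m k)]
              _ < (|z k| / (|m k| + 1)) * (|m k| + 1) := by
                  apply mul_lt_mul_of_pos_right (lt_of_lt_of_le ht hεk) (by positivity)
              _ = |z k| := by field_simp
          have h1 : 0 < z k + t * m k := by
            have habs : |z k| = z k := abs_of_pos h
            linarith [neg_lt_of_abs_lt hsmall]
          rw [max_eq_right (le_of_lt h1), max_eq_right (le_of_lt h), if_pos h]
          ring
      have harg : ∀ k, (∑ i, w k i * (xs + t • vf) i + b k) = z k + t * m k := by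
        intro k
        have e1 : (∑ i, w k i * (xs + t • vf) i) = ∑ i, (w k i * xs i + t * (w k i * vf i)) :=
          Finset.sum_congr rfl fun i _ => by
            show w k i * (xs i + t * vf i) = _
            ring
        rw [e1, Finset.sum_add_distrib, ← Finset.mul_sum]
        show _ = (∑ i, w k i * xs i + b k) + t * ∑ i, w k i * vf i
        ring
      rw [hg, hg]
      calc ∑ k, c k * max 0 (∑ i, w k i * (xs + t • vf) i + b k)
          = ∑ k, (c k * max 0 (z k) + t * (c k * (if 0 < z k then m k else 0))) := by
            apply Finset.sum_congr rfl; intro k _; rw [harg k]; exact hterm k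
        _ = ∑ k, c k * max 0 (z k) + t * L := by
            rw [Finset.sum_add_distrib, hL, Finset.mul_sum]
        _ = (∑ k, c k * max 0 (z k)) + t * L := rfl
    -- now derive the contradiction
    have hnv : (0:ℝ) < ‖vf‖ + 1 := by positivity
    set t : ℝ := min ε (δ / (‖vf‖ + 1)) / 2 with htdef
    have ht0 : 0 < t := by
      apply div_pos _ (by norm_num)
      exact lt_min hεpos (div_pos hδ hnv)
    have htε : t < ε := by
      have : t ≤ ε / 2 := by
        apply div_le_div_of_nonneg_right (min_le_left _ _) (by norm_num)
      linarith
    have htδ : t * ‖vf‖ < δ := by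
      have h1 : t ≤ (δ / (‖vf‖ + 1)) / 2 := by
        apply div_le_div_of_nonneg_right (min_le_right _ _) (by norm_num)
      have h2 : t * ‖vf‖ ≤ t * (‖vf‖ + 1) := by nlinarith [norm_nonneg vf]
      have h3 : t * (‖vf‖ + 1) ≤ ((δ / (‖vf‖ + 1)) / 2) * (‖vf‖ + 1) := by
        apply mul_le_mul_of_nonneg_right h1 (le_of_lt hnv)
      have h4 : ((δ / (‖vf‖ + 1)) / 2) * (‖vf‖ + 1) = δ / 2 := by field_simp
      linarith
    have hmem : ∀ u : ℝ, |u| ≤ t → xs + u • vf ∈ U := by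
      intro u hu
      apply hball
      rw [Metric.mem_ball, dist_eq_norm, add_sub_cancel_left, norm_smul]
      calc ‖u‖ * ‖vf‖ ≤ t * ‖vf‖ := by
            apply mul_le_mul_of_nonneg_right _ (norm_nonneg vf)
            rwa [Real.norm_eq_abs]
        _ < δ := htδ
    have hne0 : ∀ u : ℝ, u ≠ 0 → xs + u • vf ≠ xs := by
      intro u hu h
      have : u • vf = 0 := by
        have := congrArg (fun y => y - xs) h
        simpa [add_sub_cancel_left] using this
      exact (smul_ne_zero hu hvf0) this
    have hpos : g xs < g (xs + t • vf) :=
      hUmin _ (hmem t (by rw [abs_of_pos ht0])) (hne0 t (ne_of_gt ht0))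
    have hneg : g xs < g (xs + (-t) • vf) :=
      hUmin _ (hmem (-t) (by rw [abs_neg, abs_of_pos ht0])) (hne0 (-t) (by linarith))
    rw [key t (by rwa [abs_of_pos ht0])] at hpos
    rw [key (-t) (by rwa [abs_neg, abs_of_pos ht0])] at hneg
    nlinarith
  -- Step 2: extract a linearly independent subfamily of size d
  obtain ⟨bs, hbsub, hbspan, hbli⟩ := exists_linearIndependent ℝ (W '' S)
  rw [hspan] at hbspan
  have hbfin : bs.Finite := hbli.setFinite
  haveI : Fintype bs := hbfin.fintype
  have hbcard : hbfin.toFinset.card = d := by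
    have hB : Module.Basis bs ℝ E := Module.Basis.mk hbli (by rw [Subtype.range_coe, hbspan])
    have h1 : Module.finrank ℝ E = Fintype.card bs := Module.finrank_eq_card_basis hB
    have h2 : Module.finrank ℝ E = d := finrank_euclideanSpace_fin
    have h3 : Fintype.card bs = d := by rw [← h1, h2]
    rw [Set.Finite.card_toFinset]
    simpa using h3
  have hsel : ∀ x ∈ hbfin.toFinset, ∃ k, k ∈ S ∧ W k = x := by
    intro x hx
    have : x ∈ W '' S := hbsub (hbfin.mem_toFinset.mp hx)
    obtain ⟨k, hk, hkx⟩ := this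
    exact ⟨k, hk, hkx⟩
  choose f hfS hfW using hsel
  set s : Finset (Fin D) := hbfin.toFinset.attach.image (fun x => f x.1 x.2) with hs
  have hWmem : ∀ k ∈ s, W k ∈ bs ∧ k ∈ S := by
    intro k hk
    obtain ⟨x, _, hx⟩ := Finset.mem_image.mp hk
    constructor
    · rw [← hx, hfW x.1 x.2]; exact hbfin.mem_toFinset.mp x.2
    · rw [← hx]; exact hfS x.1 x.2
  have hcard : s.card = d := by
    rw [hs, Finset.card_image_of_injOn, Finset.card_attach, hbcard]
    intro x _ y _ hxy
    have hxy' : f x.1 x.2 = f y.1 y.2 := hxy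
    have hx : W (f x.1 x.2) = x.1 := hfW x.1 x.2
    have hy : W (f y.1 y.2) = y.1 := hfW y.1 y.2
    rw [hxy'] at hx
    exact Subtype.ext (hx ▸ hy)
  refine ⟨s, hcard, ?_, fun k hk => (hWmem k hk).2⟩
  -- linear independence
  have hWinj : ∀ k₁ ∈ s, ∀ k₂ ∈ s, W k₁ = W k₂ → k₁ = k₂ := by
    intro k₁ hk₁ k₂ hk₂ hW12
    obtain ⟨x, _, hx⟩ := Finset.mem_image.mp hk₁
    obtain ⟨y, _, hy⟩ := Finset.mem_image.mp hk₂
    have hx' : W k₁ = x.1 := by rw [← hx]; exact hfW x.1 x.2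
    have hy' : W k₂ = y.1 := by rw [← hy]; exact hfW y.1 y.2
    have hxy : x.1 = y.1 := by rw [← hx', ← hy', hW12]
    have : x = y := Subtype.ext hxy
    rw [← hx, ← hy, this]
  have hliW : LinearIndependent ℝ (fun k : s => W k) := by
    let e : {k // k ∈ s} → bs := fun k => ⟨W k.1, (hWmem k.1 k.2).1⟩
    have einj : Function.Injective e := by
      intro k₁ k₂ h
      have h' : W k₁.1 = W k₂.1 := congrArg Subtype.val h
      exact Subtype.ext (hWinj k₁.1 k₁.2 k₂.1 k₂.2 h')
    exact hbli.comp e einj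
  -- transfer linear independence from E to Fin d → ℝ
  have hlin := hliW.map' (WithLp.linearEquiv 2 ℝ (Fin d → ℝ)).toLinearMap
    (LinearEquiv.ker _)
  have hcomp : (⇑(WithLp.linearEquiv 2 ℝ (Fin d → ℝ)).toLinearMap ∘ fun k : s => W k) = fun k : s => w k := by
    funext k; rfl
  rw [hcomp] at hlin
  exact hlin
end

section
/- If x* is a strict local minimum of the basic surrogate model g, then x* has integer coordinates and satisfies the bounds l_i ≤ x*_i ≤ u_i for all i = 1,…,d. -/
/-- If `xs` is a strict local minimum of the basic surrogate model, then `xs` has integer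
coordinates satisfying the bounds `l i ≤ xs i ≤ u i`.  The basic model is
`g x = c₀ + ∑ i ∑_{l i ≤ j ≤ u i} (cp i j * max 0 (x i - j) + cm i j * max 0 (j - x i))`,
where the basis function `x i - j` is absent at `j = u i` and `-(x i - j)` is absent at
`j = l i` (encoded by forcing the corresponding coefficients to zero). -/
theorem strict_local_min_basic_model_integer (d : ℕ)
    (l u : Fin d → ℤ) (hlu : ∀ i, l i ≤ u i)
    (c0 : ℝ) (cp cm : Fin d → ℤ → ℝ)
    (hcp : ∀ i, cp i (u i) = 0) (hcm : ∀ i, cm i (l i) = 0)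
    (g : (Fin d → ℝ) → ℝ)
    (hg : ∀ x, g x = c0 + ∑ i, ∑ j ∈ Finset.Icc (l i) (u i),
      (cp i j * max 0 (x i - (j : ℝ)) + cm i j * max 0 ((j : ℝ) - x i)))
    (xs : Fin d → ℝ)
    (hmin : ∃ U ∈ nhds xs, ∀ x ∈ U, x ≠ xs → g xs < g x) :
    ∀ i, ∃ j : ℤ, xs i = (j : ℝ) ∧ l i ≤ j ∧ j ≤ u i := by
  intro i
  by_contra hne
  push_neg at hne
  have hne' : ∀ j ∈ Finset.Icc (l i) (u i), xs i ≠ (j : ℝ) := by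
    intro j hj heq
    rw [Finset.mem_Icc] at hj
    exact absurd (hne j heq hj.1) (not_lt.2 hj.2)
  have hni : (Finset.Icc (l i) (u i)).Nonempty := Finset.nonempty_Icc.2 (hlu i)
  set δ : ℝ := (Finset.Icc (l i) (u i)).inf' hni (fun j => |xs i - (j : ℝ)|) with hδdef
  have hδpos : 0 < δ := by
    rw [hδdef, Finset.lt_inf'_iff]
    intro j hj
    exact abs_pos.2 (sub_ne_zero.2 (hne' j hj))
  have hδle : ∀ j ∈ Finset.Icc (l i) (u i), δ ≤ |xs i - (j : ℝ)| :=
    fun j hj => Finset.inf'_le _ hj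
  set b : ℝ := ∑ j ∈ Finset.Icc (l i) (u i),
      (cp i j * (if (j : ℝ) < xs i then 1 else 0)
        - cm i j * (if xs i < (j : ℝ) then 1 else 0)) with hbdef
  have key : ∀ t : ℝ, |t| < δ →
      g (Function.update xs i (xs i + t)) = g xs + b * t := by
    intro t ht
    rw [hg, hg]
    have hsplit : ∀ y : Fin d → ℝ,
        (∑ i', ∑ j ∈ Finset.Icc (l i') (u i'),
          (cp i' j * max 0 (y i' - (j : ℝ)) + cm i' j * max 0 ((j : ℝ) - y i')))
        = (∑ i' ∈ Finset.univ \ {i}, ∑ j ∈ Finset.Icc (l i') (u i'),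
          (cp i' j * max 0 (y i' - (j : ℝ)) + cm i' j * max 0 ((j : ℝ) - y i')))
          + ∑ j ∈ Finset.Icc (l i) (u i),
            (cp i j * max 0 (y i - (j : ℝ)) + cm i j * max 0 ((j : ℝ) - y i)) := by
      intro y
      exact Finset.sum_eq_sum_sdiff_singleton_add (Finset.mem_univ i) _
    rw [hsplit, hsplit]
    have hoff : (∑ i' ∈ Finset.univ \ {i}, ∑ j ∈ Finset.Icc (l i') (u i'),
          (cp i' j * max 0 (Function.update xs i (xs i + t) i' - (j : ℝ))
            + cm i' j * max 0 ((j : ℝ) - Function.update xs i (xs i + t) i')))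
        = ∑ i' ∈ Finset.univ \ {i}, ∑ j ∈ Finset.Icc (l i') (u i'),
          (cp i' j * max 0 (xs i' - (j : ℝ)) + cm i' j * max 0 ((j : ℝ) - xs i')) := by
      apply Finset.sum_congr rfl
      intro i' hi'
      have : i' ≠ i := by
        simp [Finset.mem_sdiff] at hi'
        exact hi'
      rw [Function.update_of_ne this]
    rw [hoff, Function.update_self]
    have hmain : (∑ j ∈ Finset.Icc (l i) (u i),
          (cp i j * max 0 (xs i + t - (j : ℝ)) + cm i j * max 0 ((j : ℝ) - (xs i + t))))
        = (∑ j ∈ Finset.Icc (l i) (u i),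
          (cp i j * max 0 (xs i - (j : ℝ)) + cm i j * max 0 ((j : ℝ) - xs i))) + b * t := by
      rw [hbdef, Finset.sum_mul, ← Finset.sum_add_distrib]
      apply Finset.sum_congr rfl
      intro j hj
      have hjt : |t| < |xs i - (j : ℝ)| := lt_of_lt_of_le ht (hδle j hj)
      rcases lt_or_gt_of_ne (hne' j hj).symm with h | h
      · -- (j : ℝ) < xs i
        have h1 : (0:ℝ) ≤ xs i - j := by linarith
        have habs : |xs i - (j : ℝ)| = xs i - j := abs_of_nonneg h1
        rw [habs] at hjt
        have ht1 : -(xs i - (j:ℝ)) < t := neg_lt_of_abs_lt hjt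
        have ht2 : t < xs i - (j:ℝ) := lt_of_abs_lt hjt
        rw [max_eq_right (by linarith : (0:ℝ) ≤ xs i + t - j),
            max_eq_right h1,
            max_eq_left (by linarith : (j:ℝ) - (xs i + t) ≤ 0),
            max_eq_left (by linarith : (j:ℝ) - xs i ≤ 0),
            if_pos h, if_neg (by linarith : ¬ xs i < (j:ℝ))]
        ring
      · -- xs i < j
        have h1 : xs i - (j:ℝ) ≤ 0 := by linarith
        have habs : |xs i - (j : ℝ)| = (j:ℝ) - xs i := by
          rw [abs_of_nonpos h1]; ring
        rw [habs] at hjt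
        have ht1 : -((j:ℝ) - xs i) < t := neg_lt_of_abs_lt hjt
        have ht2 : t < (j:ℝ) - xs i := lt_of_abs_lt hjt
        rw [max_eq_left (by linarith : xs i + t - (j:ℝ) ≤ 0),
            max_eq_left h1,
            max_eq_right (by linarith : (0:ℝ) ≤ (j:ℝ) - (xs i + t)),
            max_eq_right (by linarith : (0:ℝ) ≤ (j:ℝ) - xs i),
            if_neg (by linarith : ¬ (j:ℝ) < xs i), if_pos h]
        ring
    rw [hmain]
    ring
  obtain ⟨U, hU, hstrict⟩ := hmin
  have hcont : Continuous (fun t : ℝ => Function.update xs i (xs i + t)) :=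
    continuous_const.update i (continuous_const.add continuous_id)
  have h0 : (fun t : ℝ => Function.update xs i (xs i + t)) 0 = xs := by
    simp
  have hpre : (fun t : ℝ => Function.update xs i (xs i + t)) ⁻¹' U ∈ nhds (0 : ℝ) := by
    apply hcont.continuousAt.preimage_mem_nhds
    simpa using hU
  obtain ⟨ε, hε, hball⟩ := Metric.mem_nhds_iff.1 hpre
  set t0 : ℝ := min δ ε / 2 with ht0def
  have ht0pos : 0 < t0 := by
    have := lt_min hδpos hε
    positivity
  have ht0δ : t0 < δ := by
    have : t0 ≤ δ / 2 := by
      rw [ht0def]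
      have := min_le_left δ ε
      linarith
    linarith
  have ht0ε : t0 < ε := by
    have : t0 ≤ ε / 2 := by
      rw [ht0def]
      have := min_le_right δ ε
      linarith
    linarith
  have hmem : ∀ t : ℝ, |t| < ε → Function.update xs i (xs i + t) ∈ U := by
    intro t htε
    apply hball
    rw [Metric.mem_ball, Real.dist_eq, sub_zero]
    exact htε
  have hnex : ∀ t : ℝ, t ≠ 0 → Function.update xs i (xs i + t) ≠ xs := by
    intro t htne h
    have := congrFun h i
    rw [Function.update_self] at this
    exact htne (by linarith)
  have habs1 : |t0| < δ := by rwa [abs_of_pos ht0pos]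
  have habs2 : |(-t0)| < δ := by rwa [abs_neg, abs_of_pos ht0pos]
  have h1 : g xs < g (Function.update xs i (xs i + t0)) :=
    hstrict _ (hmem t0 (by rwa [abs_of_pos ht0pos])) (hnex t0 (ne_of_gt ht0pos))
  have h2 : g xs < g (Function.update xs i (xs i + (-t0))) :=
    hstrict _ (hmem (-t0) (by rwa [abs_neg, abs_of_pos ht0pos]))
      (hnex (-t0) (by simp [ne_of_gt ht0pos]))
  rw [key t0 habs1] at h1
  rw [key (-t0) habs2] at h2
  nlinarith [h1, h2]
end

section
/- If x* is a strict local minimum of the advanced surrogate model g, then x* has integer coordinates. -/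
open Filter

private lemma max_sum_eq (a b : ℝ) (h : |b| ≤ |a|) :
    max 0 (a + b) + max 0 (a - b) = 2 * max 0 a := by
  rcases le_total 0 a with ha | ha
  · rw [abs_le] at h
    rw [abs_of_nonneg ha] at h
    rw [max_eq_right (by linarith [h.1, h.2]), max_eq_right (by linarith [h.1, h.2]),
      max_eq_right ha]
    ring
  · rw [abs_le] at h
    rw [abs_of_nonpos ha] at h
    rw [max_eq_left (by linarith [h.1, h.2]), max_eq_left (by linarith [h.1, h.2]),
      max_eq_left ha]
    ring

private lemma key_ev (a b : ℝ) (hab : a = 0 → b = 0) :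
    ∀ᶠ t : ℝ in nhds 0, max 0 (a + t * b) + max 0 (a - t * b) = 2 * max 0 a := by
  by_cases hb : b = 0
  · filter_upwards with t; simp [hb]; ring
  · have ha : a ≠ 0 := fun h => hb (hab h)
    have hpos : (0 : ℝ) < |a| / |b| := by positivity
    have hev : ∀ᶠ t : ℝ in nhds 0, |t| < |a| / |b| := by
      have := Metric.ball_mem_nhds (0 : ℝ) hpos
      filter_upwards [this] with t ht
      simpa [Real.dist_eq] using ht
    filter_upwards [hev] with t ht
    apply max_sum_eq
    rw [abs_mul]
    calc |t| * |b| ≤ (|a| / |b|) * |b| := by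
          apply mul_le_mul_of_nonneg_right (le_of_lt ht) (abs_nonneg b)
      _ = |a| := by field_simp

/-- If `xs` is a strict local minimum of the advanced surrogate model (basic basis functions
`±(x i - j)` plus difference basis functions `±(x i - x (i-1) - j)`), then `xs` has integer
coordinates.  The dimension is `n + 1`; consecutive coordinate pairs are indexed by
`i : Fin n` via `i.castSucc` and `i.succ`. -/
theorem strict_local_min_advanced_model_integer (n : ℕ)
    (l u : Fin (n + 1) → ℤ) (hlu : ∀ i, l i ≤ u i)
    (c0 : ℝ) (cp cm : Fin (n + 1) → ℤ → ℝ) (dp dm : Fin n → ℤ → ℝ)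
    (hcp : ∀ i, cp i (u i) = 0) (hcm : ∀ i, cm i (l i) = 0)
    (hdp : ∀ i, dp i (u i.succ - l i.castSucc) = 0)
    (hdm : ∀ i, dm i (l i.succ - u i.castSucc) = 0)
    (g : (Fin (n + 1) → ℝ) → ℝ)
    (hg : ∀ x, g x = c0
      + (∑ i, ∑ j ∈ Finset.Icc (l i) (u i),
          (cp i j * max 0 (x i - (j : ℝ)) + cm i j * max 0 ((j : ℝ) - x i)))
      + (∑ i, ∑ j ∈ Finset.Icc (l i.succ - u i.castSucc) (u i.succ - l i.castSucc),
          (dp i j * max 0 (x i.succ - x i.castSucc - (j : ℝ))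
            + dm i j * max 0 ((j : ℝ) - (x i.succ - x i.castSucc)))))
    (xs : Fin (n + 1) → ℝ)
    (hmin : ∃ U ∈ nhds xs, ∀ x ∈ U, x ≠ xs → g xs < g x) :
    ∀ i, ∃ j : ℤ, xs i = (j : ℝ) := by
  by_contra hcon
  push_neg at hcon
  obtain ⟨i₀, hi₀⟩ := hcon
  classical
  set v : Fin (n + 1) → ℝ := fun i => if ∃ j : ℤ, xs i = (j : ℝ) then 0 else 1 with hv
  have hvi₀ : v i₀ = 1 := by simp [hv, hi₀]
  -- key property: active basis functions have zero directional derivative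
  have hkey1 : ∀ i : Fin (n + 1), ∀ j : ℤ, xs i - (j : ℝ) = 0 → v i = 0 := by
    intro i j h
    have : xs i = (j : ℝ) := by linarith
    simp only [hv]
    rw [if_pos ⟨j, this⟩]
  have hkey2 : ∀ i : Fin n, ∀ j : ℤ,
      xs i.succ - xs i.castSucc - (j : ℝ) = 0 → v i.succ - v i.castSucc = 0 := by
    intro i j h
    have hx : xs i.succ = xs i.castSucc + (j : ℝ) := by linarith
    have : (∃ k : ℤ, xs i.succ = (k : ℝ)) ↔ (∃ k : ℤ, xs i.castSucc = (k : ℝ)) := by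
      constructor
      · rintro ⟨k, hk⟩
        exact ⟨k - j, by push_cast; rw [← hk, hx]; ring⟩
      · rintro ⟨k, hk⟩
        exact ⟨k + j, by push_cast; rw [hx, hk]⟩
    by_cases hc : ∃ k : ℤ, xs i.castSucc = (k : ℝ)
    · simp [hv, hc, this.mpr hc]
    · have hns : ¬∃ k : ℤ, xs i.succ = (k : ℝ) := fun hs => hc (this.mp hs)
      simp only [hv]
      rw [if_neg hns, if_neg hc]
      ring
  -- eventual equalities for all basis terms
  have E1 : ∀ᶠ t : ℝ in nhds 0, ∀ i : Fin (n + 1), ∀ j ∈ Finset.Icc (l i) (u i),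
      (max 0 ((xs i - (j : ℝ)) + t * v i) + max 0 ((xs i - (j : ℝ)) - t * v i)
        = 2 * max 0 (xs i - (j : ℝ))) ∧
      (max 0 (((j : ℝ) - xs i) + t * (-v i)) + max 0 (((j : ℝ) - xs i) - t * (-v i))
        = 2 * max 0 ((j : ℝ) - xs i)) := by
    rw [eventually_all]
    intro i
    rw [Finset.eventually_all]
    intro j _
    refine (key_ev _ _ (hkey1 i j)).and (key_ev _ _ ?_)
    intro h
    have : xs i - (j : ℝ) = 0 := by linarith
    simpa using congrArg Neg.neg (hkey1 i j this)
  have E2 : ∀ᶠ t : ℝ in nhds 0, ∀ i : Fin n,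
      ∀ j ∈ Finset.Icc (l i.succ - u i.castSucc) (u i.succ - l i.castSucc),
      (max 0 ((xs i.succ - xs i.castSucc - (j : ℝ)) + t * (v i.succ - v i.castSucc))
        + max 0 ((xs i.succ - xs i.castSucc - (j : ℝ)) - t * (v i.succ - v i.castSucc))
        = 2 * max 0 (xs i.succ - xs i.castSucc - (j : ℝ))) ∧
      (max 0 (((j : ℝ) - (xs i.succ - xs i.castSucc)) + t * (-(v i.succ - v i.castSucc)))
        + max 0 (((j : ℝ) - (xs i.succ - xs i.castSucc)) - t * (-(v i.succ - v i.castSucc)))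
        = 2 * max 0 ((j : ℝ) - (xs i.succ - xs i.castSucc))) := by
    rw [eventually_all]
    intro i
    rw [Finset.eventually_all]
    intro j _
    refine (key_ev _ _ (hkey2 i j)).and (key_ev _ _ ?_)
    intro h
    have : xs i.succ - xs i.castSucc - (j : ℝ) = 0 := by linarith
    simpa using congrArg Neg.neg (hkey2 i j this)
  -- from E1, E2: g(xs + t•v) + g(xs - t•v) = 2 * g xs eventually
  have Emain : ∀ᶠ t : ℝ in nhds 0,
      g (xs + t • v) + g (xs - t • v) = 2 * g xs := by
    filter_upwards [E1, E2] with t h1 h2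
    rw [hg (xs + t • v), hg (xs - t • v), hg xs]
    have S1 : (∑ i, ∑ j ∈ Finset.Icc (l i) (u i),
          (cp i j * max 0 ((xs + t • v) i - (j : ℝ))
            + cm i j * max 0 ((j : ℝ) - (xs + t • v) i)))
        + (∑ i, ∑ j ∈ Finset.Icc (l i) (u i),
          (cp i j * max 0 ((xs - t • v) i - (j : ℝ))
            + cm i j * max 0 ((j : ℝ) - (xs - t • v) i)))
        = 2 * ∑ i, ∑ j ∈ Finset.Icc (l i) (u i),
          (cp i j * max 0 (xs i - (j : ℝ)) + cm i j * max 0 ((j : ℝ) - xs i)) := by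
      rw [← Finset.sum_add_distrib, Finset.mul_sum]
      refine Finset.sum_congr rfl fun i _ => ?_
      rw [← Finset.sum_add_distrib, Finset.mul_sum]
      refine Finset.sum_congr rfl fun j hj => ?_
      obtain ⟨ha, hb⟩ := h1 i j hj
      have e1 : (xs + t • v) i - (j : ℝ) = (xs i - (j : ℝ)) + t * v i := by
        simp [Pi.add_apply, Pi.smul_apply, smul_eq_mul]; ring
      have e2 : (xs - t • v) i - (j : ℝ) = (xs i - (j : ℝ)) - t * v i := by
        simp [Pi.sub_apply, Pi.smul_apply, smul_eq_mul]; ring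
      have e3 : (j : ℝ) - (xs + t • v) i = ((j : ℝ) - xs i) + t * (-v i) := by
        simp [Pi.add_apply, Pi.smul_apply, smul_eq_mul]; ring
      have e4 : (j : ℝ) - (xs - t • v) i = ((j : ℝ) - xs i) - t * (-v i) := by
        simp [Pi.sub_apply, Pi.smul_apply, smul_eq_mul]; ring
      rw [e1, e2, e3, e4]
      linear_combination cp i j * ha + cm i j * hb
    have S2 : (∑ i, ∑ j ∈ Finset.Icc (l i.succ - u i.castSucc) (u i.succ - l i.castSucc),
          (dp i j * max 0 ((xs + t • v) i.succ - (xs + t • v) i.castSucc - (j : ℝ))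
            + dm i j * max 0 ((j : ℝ) - ((xs + t • v) i.succ - (xs + t • v) i.castSucc))))
        + (∑ i, ∑ j ∈ Finset.Icc (l i.succ - u i.castSucc) (u i.succ - l i.castSucc),
          (dp i j * max 0 ((xs - t • v) i.succ - (xs - t • v) i.castSucc - (j : ℝ))
            + dm i j * max 0 ((j : ℝ) - ((xs - t • v) i.succ - (xs - t • v) i.castSucc))))
        = 2 * ∑ i, ∑ j ∈ Finset.Icc (l i.succ - u i.castSucc) (u i.succ - l i.castSucc),
          (dp i j * max 0 (xs i.succ - xs i.castSucc - (j : ℝ))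
            + dm i j * max 0 ((j : ℝ) - (xs i.succ - xs i.castSucc))) := by
      rw [← Finset.sum_add_distrib, Finset.mul_sum]
      refine Finset.sum_congr rfl fun i _ => ?_
      rw [← Finset.sum_add_distrib, Finset.mul_sum]
      refine Finset.sum_congr rfl fun j hj => ?_
      obtain ⟨ha, hb⟩ := h2 i j hj
      have e1 : (xs + t • v) i.succ - (xs + t • v) i.castSucc - (j : ℝ)
          = (xs i.succ - xs i.castSucc - (j : ℝ)) + t * (v i.succ - v i.castSucc) := by
        simp [Pi.add_apply, Pi.smul_apply, smul_eq_mul]; ring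
      have e2 : (xs - t • v) i.succ - (xs - t • v) i.castSucc - (j : ℝ)
          = (xs i.succ - xs i.castSucc - (j : ℝ)) - t * (v i.succ - v i.castSucc) := by
        simp [Pi.sub_apply, Pi.smul_apply, smul_eq_mul]; ring
      have e3 : (j : ℝ) - ((xs + t • v) i.succ - (xs + t • v) i.castSucc)
          = ((j : ℝ) - (xs i.succ - xs i.castSucc)) + t * (-(v i.succ - v i.castSucc)) := by
        simp [Pi.add_apply, Pi.smul_apply, smul_eq_mul]; ring
      have e4 : (j : ℝ) - ((xs - t • v) i.succ - (xs - t • v) i.castSucc)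
          = ((j : ℝ) - (xs i.succ - xs i.castSucc)) - t * (-(v i.succ - v i.castSucc)) := by
        simp [Pi.sub_apply, Pi.smul_apply, smul_eq_mul]; ring
      rw [e1, e2, e3, e4]
      linear_combination dp i j * ha + dm i j * hb
    linarith [S1, S2]
  -- the perturbed points tend to xs
  obtain ⟨U, hU, hUmin⟩ := hmin
  have hT1 : Tendsto (fun t : ℝ => xs + t • v) (nhds 0) (nhds xs) := by
    have : Continuous (fun t : ℝ => xs + t • v) :=
      continuous_const.add (continuous_id.smul continuous_const)
    have h0 : (fun t : ℝ => xs + t • v) 0 = xs := by simp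
    simpa [h0] using this.tendsto 0
  have hT2 : Tendsto (fun t : ℝ => xs - t • v) (nhds 0) (nhds xs) := by
    have : Continuous (fun t : ℝ => xs - t • v) :=
      continuous_const.sub (continuous_id.smul continuous_const)
    have h0 : (fun t : ℝ => xs - t • v) 0 = xs := by simp
    simpa [h0] using this.tendsto 0
  have hU1 : ∀ᶠ t : ℝ in nhds 0, xs + t • v ∈ U := hT1 hU
  have hU2 : ∀ᶠ t : ℝ in nhds 0, xs - t • v ∈ U := hT2 hU
  -- pick a nonzero t
  have hall : ∀ᶠ t : ℝ in nhdsWithin 0 {(0 : ℝ)}ᶜ,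
      (g (xs + t • v) + g (xs - t • v) = 2 * g xs ∧ xs + t • v ∈ U ∧ xs - t • v ∈ U)
        ∧ t ∈ ({(0 : ℝ)}ᶜ : Set ℝ) :=
    (((Emain.and (hU1.and hU2)).filter_mono nhdsWithin_le_nhds).and self_mem_nhdsWithin)
  obtain ⟨t, ⟨heq, hm1, hm2⟩, ht0⟩ := hall.exists
  have ht0' : t ≠ 0 := by simpa using ht0
  have hne1 : xs + t • v ≠ xs := by
    intro h
    have := congrFun h i₀
    simp [Pi.add_apply, Pi.smul_apply, smul_eq_mul, hvi₀] at this
    exact ht0' this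
  have hne2 : xs - t • v ≠ xs := by
    intro h
    have := congrFun h i₀
    simp [Pi.sub_apply, Pi.smul_apply, smul_eq_mul, hvi₀] at this
    exact ht0' this
  have h1 := hUmin _ hm1 hne1
  have h2 := hUmin _ hm2 hne2
  linarith
end

section
/- If x* is a non-strict local minimum of the basic model g and x̂ is obtained from x* by replacing each coordinate x*_s not in Z ∩ [l_s, u_s] by the nearest point of Z ∩ [l_s, u_s], then g(x̂) = g(x*). -/
open Finset

private lemma key_affine (φ : ℝ → ℝ) (m q A B a p : ℝ)
    (hA : A ≤ p) (hB : p ≤ B) (haA : A < a) (haB : a < B)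
    (haff : ∀ t, A ≤ t → t ≤ B → φ t = m * t + q)
    (hmin : IsLocalMin φ a) : φ p = φ a := by
  obtain ⟨δ, hδ, h⟩ := Metric.eventually_nhds_iff.mp hmin
  set ε : ℝ := min (δ / 2) (min (a - A) (B - a)) with hεdef
  have hε0 : 0 < ε := lt_min (by linarith) (lt_min (by linarith) (by linarith))
  have hεδ : ε < δ := lt_of_le_of_lt (min_le_left _ _) (by linarith)
  have hεA : ε ≤ a - A := le_trans (min_le_right _ _) (min_le_left _ _)
  have hεB : ε ≤ B - a := le_trans (min_le_right _ _) (min_le_right _ _)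
  have h1 : φ a ≤ φ (a + ε) := h (by rw [Real.dist_eq, abs_of_nonneg] <;> linarith)
  have h2 : φ a ≤ φ (a - ε) := h (by rw [Real.dist_eq, abs_of_nonpos] <;> linarith)
  rw [haff a (by linarith) (by linarith)] at h1 h2
  rw [haff (a + ε) (by linarith) (by linarith)] at h1
  rw [haff (a - ε) (by linarith) (by linarith)] at h2
  have hm : m = 0 := by nlinarith
  rw [haff p hA hB, haff a haA.le haB.le, hm]
  ring

/-- If `xs` is a non-strict local minimum of the basic model `g` and `xh` is obtained from
`xs` by moving each coordinate to the nearest point of `ℤ ∩ [l i, u i]` (rounding and then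
clamping to the bounds), then `g xh = g xs`. -/
theorem nonstrict_local_min_basic_model_projection (d : ℕ)
    (l u : Fin d → ℤ) (hlu : ∀ i, l i ≤ u i)
    (c0 : ℝ) (cp cm : Fin d → ℤ → ℝ)
    (hcp : ∀ i, cp i (u i) = 0) (hcm : ∀ i, cm i (l i) = 0)
    (g : (Fin d → ℝ) → ℝ)
    (hg : ∀ x, g x = c0 + ∑ i, ∑ j ∈ Finset.Icc (l i) (u i),
      (cp i j * max 0 (x i - (j : ℝ)) + cm i j * max 0 ((j : ℝ) - x i)))
    (xs : Fin d → ℝ)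
    (hmin : IsLocalMin g xs)
    (xh : Fin d → ℝ)
    (hxh : ∀ i, xh i = ((max (l i) (min (u i) (round (xs i))) : ℤ) : ℝ)) :
    g xh = g xs := by
  set F : Fin d → ℝ → ℝ := fun i t => ∑ j ∈ Finset.Icc (l i) (u i),
      (cp i j * max 0 (t - (j : ℝ)) + cm i j * max 0 ((j : ℝ) - t)) with hF
  have hgF : ∀ x, g x = c0 + ∑ i, F i (x i) := hg
  -- g restricted to one coordinate
  have hsum : ∀ i t, g (Function.update xs i t)
      = F i t + (c0 + ∑ k ∈ Finset.univ.erase i, F k (xs k)) := by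
    intro i t
    rw [hgF, ← Finset.add_sum_erase _ _ (Finset.mem_univ i), Function.update_self]
    have : ∑ k ∈ Finset.univ.erase i, F k (Function.update xs i t k)
        = ∑ k ∈ Finset.univ.erase i, F k (xs k) := by
      apply Finset.sum_congr rfl
      intro k hk
      rw [Function.update_of_ne (Finset.ne_of_mem_erase hk)]
    rw [this]; ring
  have hFmin : ∀ i, IsLocalMin (F i) (xs i) := by
    intro i
    have h1 : IsLocalMin (g ∘ fun t => Function.update xs i t) (xs i) := by
      apply IsLocalMin.comp_continuous
      · rw [Function.update_eq_self]; exact hmin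
      · exact (continuous_const.update i continuous_id).continuousAt
    filter_upwards [h1] with t ht
    simp only [Function.comp_apply] at ht
    rw [hsum i t, hsum i (xs i)] at ht
    linarith
  have hkey : ∀ i, F i (xh i) = F i (xs i) := by
    intro i
    set a : ℝ := xs i with ha
    have hxhi := hxh i
    by_cases hU : (u i : ℝ) < a
    · -- above the upper bound
      have hnU : u i ≤ round a := by
        rw [round_eq]
        apply Int.le_floor.mpr
        push_cast; linarith
      have hp : xh i = (u i : ℝ) := by
        rw [hxhi, min_eq_left hnU, max_eq_right (hlu i)]
      rw [hp]
      apply key_affine (F i) (∑ j ∈ Finset.Icc (l i) (u i), cp i j)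
        (∑ j ∈ Finset.Icc (l i) (u i), -(cp i j * (j : ℝ)))
        ((u i : ℝ)) (a + 1) a ((u i : ℝ)) le_rfl (by linarith) hU (by linarith)
        ?_ (hFmin i)
      intro t ht1 ht2
      rw [hF]
      rw [Finset.sum_mul, ← Finset.sum_add_distrib]
      apply Finset.sum_congr rfl
      intro j hj
      have hj2 : (j : ℝ) ≤ (u i : ℝ) := by exact_mod_cast (Finset.mem_Icc.mp hj).2
      rw [max_eq_right (by linarith : (0:ℝ) ≤ t - (j:ℝ)),
        max_eq_left (by linarith : (j:ℝ) - t ≤ 0)]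
      ring
    · by_cases hL : a < (l i : ℝ)
      · -- below the lower bound
        have hnL : round a ≤ l i := by
          rw [round_eq, ← Int.lt_add_one_iff]
          apply Int.floor_lt.mpr
          push_cast; linarith
        have hp : xh i = (l i : ℝ) := by
          rw [hxhi, min_eq_right (le_trans hnL (hlu i)), max_eq_left hnL]
        rw [hp]
        apply key_affine (F i) (∑ j ∈ Finset.Icc (l i) (u i), -(cm i j))
          (∑ j ∈ Finset.Icc (l i) (u i), cm i j * (j : ℝ))
          (a - 1) ((l i : ℝ)) a ((l i : ℝ)) (by linarith) le_rfl (by linarith) hL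
          ?_ (hFmin i)
        intro t ht1 ht2
        rw [hF]
        rw [Finset.sum_mul, ← Finset.sum_add_distrib]
        apply Finset.sum_congr rfl
        intro j hj
        have hj1 : (l i : ℝ) ≤ (j : ℝ) := by exact_mod_cast (Finset.mem_Icc.mp hj).1
        rw [max_eq_left (by linarith : t - (j:ℝ) ≤ 0),
          max_eq_right (by linarith : (0:ℝ) ≤ (j:ℝ) - t)]
        ring
      · -- inside the bounds
        push_neg at hU hL
        have h1 : l i ≤ round a := by
          rw [round_eq]
          apply Int.le_floor.mpr
          push_cast; linarith
        have h2 : round a ≤ u i := by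
          rw [round_eq, ← Int.lt_add_one_iff]
          apply Int.floor_lt.mpr
          push_cast; linarith
        have hp : xh i = ((round a : ℤ) : ℝ) := by
          rw [hxhi, min_eq_right h2, max_eq_right h1]
        by_cases heq : ((round a : ℤ) : ℝ) = a
        · rw [hp, heq]
        · have hfl : ((⌊a⌋ : ℤ) : ℝ) ≤ a := Int.floor_le a
          have hfa : ((⌊a⌋ : ℤ) : ℝ) < a := by
            rcases hfl.lt_or_eq with h | h
            · exact h
            · exfalso; apply heq
              rw [← h, round_intCast, h]
          have haB : a < ((⌊a⌋ : ℤ) : ℝ) + 1 := by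
            have := Int.lt_floor_add_one a; linarith
          have hr1 : ((⌊a⌋ : ℤ) : ℝ) ≤ ((round a : ℤ) : ℝ) := by
            have : ⌊a⌋ ≤ round a := by
              rw [round_eq]; exact Int.floor_mono (by linarith)
            exact_mod_cast this
          have hr2 : ((round a : ℤ) : ℝ) ≤ ((⌊a⌋ : ℤ) : ℝ) + 1 := by
            have : round a ≤ ⌊a⌋ + 1 := by
              rw [round_eq, ← Int.lt_add_one_iff]
              apply Int.floor_lt.mpr
              push_cast; linarith
            have h' : ((round a : ℤ) : ℝ) ≤ ((⌊a⌋ + 1 : ℤ) : ℝ) := by exact_mod_cast this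
            push_cast at h' ⊢; linarith
          rw [hp]
          apply key_affine (F i)
            (∑ j ∈ Finset.Icc (l i) (u i), (if j ≤ ⌊a⌋ then cp i j else -(cm i j)))
            (∑ j ∈ Finset.Icc (l i) (u i), (if j ≤ ⌊a⌋ then -(cp i j * (j:ℝ)) else cm i j * (j:ℝ)))
            ((⌊a⌋ : ℤ) : ℝ) (((⌊a⌋ : ℤ) : ℝ) + 1) a ((round a : ℤ) : ℝ)
            hr1 hr2 hfa haB ?_ (hFmin i)
          intro t ht1 ht2
          rw [hF]
          rw [Finset.sum_mul, ← Finset.sum_add_distrib]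
          apply Finset.sum_congr rfl
          intro j hj
          by_cases hjf : j ≤ ⌊a⌋
          · have hjr : (j : ℝ) ≤ ((⌊a⌋ : ℤ) : ℝ) := by exact_mod_cast hjf
            rw [if_pos hjf, if_pos hjf,
              max_eq_right (by linarith : (0:ℝ) ≤ t - (j:ℝ)),
              max_eq_left (by linarith : (j:ℝ) - t ≤ 0)]
            ring
          · have hjr : ((⌊a⌋ : ℤ) : ℝ) + 1 ≤ (j : ℝ) := by
              have : ⌊a⌋ + 1 ≤ j := by omega
              exact_mod_cast this
            rw [if_neg hjf, if_neg hjf,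
              max_eq_left (by linarith : t - (j:ℝ) ≤ 0),
              max_eq_right (by linarith : (0:ℝ) ≤ (j:ℝ) - t)]
            ring
  rw [hgF xh, hgF xs]
  congr 1
  exact Finset.sum_congr rfl fun i _ => hkey i
end

section
/- If x* is a non-strict local minimum of the advanced model g, then g retains the same value when x* is rounded coordinate-wise to the nearest integer: g(round(x*)) = g(x*). -/
open Filter Topology

private lemma int_le_of_lt_add_one {j m : ℤ} (h : (j : ℝ) - 1 < (m : ℝ)) : (j : ℝ) ≤ (m : ℝ) := by
  have : j - 1 < m := by exact_mod_cast h
  have : j ≤ m := by omega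
  exact_mod_cast this

private lemma round_ge_of_le {r : ℝ} {j : ℤ} (h : (j : ℝ) ≤ r) : (j : ℝ) ≤ ((round r : ℤ) : ℝ) := by
  have h1 := sub_half_lt_round r
  exact int_le_of_lt_add_one (by linarith)

private lemma round_le_of_ge {r : ℝ} {j : ℤ} (h : r ≤ (j : ℝ)) : ((round r : ℤ) : ℝ) ≤ (j : ℝ) := by
  have h1 := round_le_add_half r
  have : ((round r : ℤ) : ℝ) - 1 < (j : ℝ) := by linarith
  have h2 : (round r : ℤ) - 1 < j := by exact_mod_cast this
  have : (round r : ℤ) ≤ j := by omega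
  exact_mod_cast this

private lemma round_sub_ge {a b : ℝ} {j : ℤ} (h : (j : ℝ) ≤ a - b) :
    (j : ℝ) ≤ ((round a : ℤ) : ℝ) - ((round b : ℤ) : ℝ) := by
  have h1 := sub_half_lt_round a
  have h2 := round_le_add_half b
  have : (j : ℝ) - 1 < ((round a - round b : ℤ) : ℝ) := by push_cast; linarith
  have := int_le_of_lt_add_one this
  push_cast at this; linarith

private lemma round_sub_le {a b : ℝ} {j : ℤ} (h : a - b ≤ (j : ℝ)) :
    ((round a : ℤ) : ℝ) - ((round b : ℤ) : ℝ) ≤ (j : ℝ) := by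
  have h1 := round_le_add_half a
  have h2 := sub_half_lt_round b
  have h3 : ((round a - round b : ℤ) : ℝ) - 1 < (j : ℝ) := by push_cast; linarith
  have h4 : (round a - round b : ℤ) - 1 < j := by exact_mod_cast h3
  have h5 : (round a - round b : ℤ) ≤ j := by omega
  have : ((round a - round b : ℤ) : ℝ) ≤ (j : ℝ) := by exact_mod_cast h5
  push_cast at this; linarith

/-- Key ReLU lemma: if the sign of the argument is preserved between `a` and `a'`,
then near `t = 0`, `max 0` of the interpolated argument is affine. -/
private lemma relu_eventually (a a' : ℝ) (h1 : 0 ≤ a → 0 ≤ a') (h2 : a ≤ 0 → a' ≤ 0) :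
    ∀ᶠ t in 𝓝 (0 : ℝ), max 0 (a + t * (a' - a)) = max 0 a + t * (max 0 a' - max 0 a) := by
  rcases lt_trichotomy a 0 with h | h | h
  · have ha' := h2 h.le
    have hc : Filter.Tendsto (fun t : ℝ => a + t * (a' - a)) (𝓝 0) (𝓝 a) := by
      have : Continuous (fun t : ℝ => a + t * (a' - a)) := by continuity
      simpa using this.tendsto 0
    filter_upwards [hc.eventually_lt_const h] with t ht
    rw [max_eq_left ht.le, max_eq_left h.le, max_eq_left ha']
    ring
  · have ha' : a' = 0 := le_antisymm (h2 h.le) (h1 h.ge)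
    filter_upwards with t
    simp [h, ha']
  · have ha' := h1 h.le
    have hc : Filter.Tendsto (fun t : ℝ => a + t * (a' - a)) (𝓝 0) (𝓝 a) := by
      have : Continuous (fun t : ℝ => a + t * (a' - a)) := by continuity
      simpa using this.tendsto 0
    filter_upwards [hc.eventually_const_lt h] with t ht
    rw [max_eq_right ht.le, max_eq_right h.le, max_eq_right ha']

/-- If `xs` is a non-strict local minimum of the advanced model `g`, then `g` retains the
same value when `xs` is rounded coordinate-wise to the nearest integer. -/
theorem nonstrict_local_min_advanced_model_rounding (n : ℕ)
    (l u : Fin (n + 1) → ℤ) (hlu : ∀ i, l i ≤ u i)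
    (c0 : ℝ) (cp cm : Fin (n + 1) → ℤ → ℝ) (dp dm : Fin n → ℤ → ℝ)
    (hcp : ∀ i, cp i (u i) = 0) (hcm : ∀ i, cm i (l i) = 0)
    (hdp : ∀ i, dp i (u i.succ - l i.castSucc) = 0)
    (hdm : ∀ i, dm i (l i.succ - u i.castSucc) = 0)
    (g : (Fin (n + 1) → ℝ) → ℝ)
    (hg : ∀ x, g x = c0
      + (∑ i, ∑ j ∈ Finset.Icc (l i) (u i),
          (cp i j * max 0 (x i - (j : ℝ)) + cm i j * max 0 ((j : ℝ) - x i)))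
      + (∑ i, ∑ j ∈ Finset.Icc (l i.succ - u i.castSucc) (u i.succ - l i.castSucc),
          (dp i j * max 0 (x i.succ - x i.castSucc - (j : ℝ))
            + dm i j * max 0 ((j : ℝ) - (x i.succ - x i.castSucc)))))
    (xs : Fin (n + 1) → ℝ)
    (hmin : IsLocalMin g xs) :
    g (fun i => ((round (xs i) : ℤ) : ℝ)) = g xs := by
  set y : Fin (n + 1) → ℝ := fun i => ((round (xs i) : ℤ) : ℝ) with hy
  set p : ℝ → (Fin (n + 1) → ℝ) := fun t => fun i => xs i + t * (y i - xs i) with hp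
  have hp0 : p 0 = xs := by funext i; simp [hp]
  -- per-coordinate eventual equalities
  have E1 : ∀ᶠ t in 𝓝 (0 : ℝ), ∀ i : Fin (n + 1), ∀ j ∈ Finset.Icc (l i) (u i),
      max 0 (p t i - (j : ℝ)) = max 0 (xs i - j) + t * (max 0 (y i - j) - max 0 (xs i - j)) ∧
      max 0 ((j : ℝ) - p t i) = max 0 ((j : ℝ) - xs i) + t * (max 0 ((j : ℝ) - y i) - max 0 ((j : ℝ) - xs i)) := by
    rw [Filter.eventually_all]
    intro i
    rw [Filter.eventually_all_finset]
    intro j _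
    have A := relu_eventually (xs i - j) (y i - j)
      (fun h => by have := round_ge_of_le (r := xs i) (j := j) (by linarith); simp only [hy]; linarith)
      (fun h => by have := round_le_of_ge (r := xs i) (j := j) (by linarith); simp only [hy]; linarith)
    have B := relu_eventually ((j : ℝ) - xs i) ((j : ℝ) - y i)
      (fun h => by have := round_le_of_ge (r := xs i) (j := j) (by linarith); simp only [hy]; linarith)
      (fun h => by have := round_ge_of_le (r := xs i) (j := j) (by linarith); simp only [hy]; linarith)
    filter_upwards [A, B] with t hA hB
    constructor
    · have : p t i - (j : ℝ) = (xs i - j) + t * ((y i - j) - (xs i - j)) := by simp [hp]; ring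
      rw [this, hA]
    · have : (j : ℝ) - p t i = ((j : ℝ) - xs i) + t * (((j : ℝ) - y i) - ((j : ℝ) - xs i)) := by
        simp [hp]; ring
      rw [this, hB]
  have E2 : ∀ᶠ t in 𝓝 (0 : ℝ), ∀ i : Fin n,
      ∀ j ∈ Finset.Icc (l i.succ - u i.castSucc) (u i.succ - l i.castSucc),
      max 0 (p t i.succ - p t i.castSucc - (j : ℝ)) =
        max 0 (xs i.succ - xs i.castSucc - j)
          + t * (max 0 (y i.succ - y i.castSucc - j) - max 0 (xs i.succ - xs i.castSucc - j)) ∧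
      max 0 ((j : ℝ) - (p t i.succ - p t i.castSucc)) =
        max 0 ((j : ℝ) - (xs i.succ - xs i.castSucc))
          + t * (max 0 ((j : ℝ) - (y i.succ - y i.castSucc)) - max 0 ((j : ℝ) - (xs i.succ - xs i.castSucc))) := by
    rw [Filter.eventually_all]
    intro i
    rw [Filter.eventually_all_finset]
    intro j _
    have A := relu_eventually (xs i.succ - xs i.castSucc - j) (y i.succ - y i.castSucc - j)
      (fun h => by
        have := round_sub_ge (a := xs i.succ) (b := xs i.castSucc) (j := j) (by linarith)
        simp only [hy]; linarith)
      (fun h => by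
        have := round_sub_le (a := xs i.succ) (b := xs i.castSucc) (j := j) (by linarith)
        simp only [hy]; linarith)
    have B := relu_eventually ((j : ℝ) - (xs i.succ - xs i.castSucc)) ((j : ℝ) - (y i.succ - y i.castSucc))
      (fun h => by
        have := round_sub_le (a := xs i.succ) (b := xs i.castSucc) (j := j) (by linarith)
        simp only [hy]; linarith)
      (fun h => by
        have := round_sub_ge (a := xs i.succ) (b := xs i.castSucc) (j := j) (by linarith)
        simp only [hy]; linarith)
    filter_upwards [A, B] with t hA hB
    constructor
    · have : p t i.succ - p t i.castSucc - (j : ℝ)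
          = (xs i.succ - xs i.castSucc - j) + t * ((y i.succ - y i.castSucc - j) - (xs i.succ - xs i.castSucc - j)) := by
        simp [hp]; ring
      rw [this, hA]
    · have : (j : ℝ) - (p t i.succ - p t i.castSucc)
          = ((j : ℝ) - (xs i.succ - xs i.castSucc))
            + t * (((j : ℝ) - (y i.succ - y i.castSucc)) - ((j : ℝ) - (xs i.succ - xs i.castSucc))) := by
        simp [hp]; ring
      rw [this, hB]
  -- eventually, g along the path is affine
  have Eaff : ∀ᶠ t in 𝓝 (0 : ℝ), g (p t) = g xs + t * (g y - g xs) := by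
    filter_upwards [E1, E2] with t h1 h2
    rw [hg (p t), hg xs, hg y]
    have S1 : ∀ i : Fin (n + 1),
        ∑ j ∈ Finset.Icc (l i) (u i),
          (cp i j * max 0 (p t i - (j : ℝ)) + cm i j * max 0 ((j : ℝ) - p t i))
        = ∑ j ∈ Finset.Icc (l i) (u i),
            ((cp i j * max 0 (xs i - j) + cm i j * max 0 ((j : ℝ) - xs i))
              + t * ((cp i j * max 0 (y i - j) + cm i j * max 0 ((j : ℝ) - y i))
                - (cp i j * max 0 (xs i - j) + cm i j * max 0 ((j : ℝ) - xs i)))) := by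
      intro i
      refine Finset.sum_congr rfl fun j hj => ?_
      obtain ⟨hA, hB⟩ := h1 i j hj
      rw [hA, hB]; ring
    have S2 : ∀ i : Fin n,
        ∑ j ∈ Finset.Icc (l i.succ - u i.castSucc) (u i.succ - l i.castSucc),
          (dp i j * max 0 (p t i.succ - p t i.castSucc - (j : ℝ))
            + dm i j * max 0 ((j : ℝ) - (p t i.succ - p t i.castSucc)))
        = ∑ j ∈ Finset.Icc (l i.succ - u i.castSucc) (u i.succ - l i.castSucc),
            ((dp i j * max 0 (xs i.succ - xs i.castSucc - j)
                + dm i j * max 0 ((j : ℝ) - (xs i.succ - xs i.castSucc)))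
              + t * ((dp i j * max 0 (y i.succ - y i.castSucc - j)
                  + dm i j * max 0 ((j : ℝ) - (y i.succ - y i.castSucc)))
                - (dp i j * max 0 (xs i.succ - xs i.castSucc - j)
                  + dm i j * max 0 ((j : ℝ) - (xs i.succ - xs i.castSucc))))) := by
      intro i
      refine Finset.sum_congr rfl fun j hj => ?_
      obtain ⟨hA, hB⟩ := h2 i j hj
      rw [hA, hB]; ring
    rw [Finset.sum_congr rfl (fun i _ => S1 i), Finset.sum_congr rfl (fun i _ => S2 i)]
    simp only [Finset.sum_add_distrib, ← Finset.mul_sum, Finset.sum_sub_distrib]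
    ring
  -- local min along the path
  have hcont : Filter.Tendsto p (𝓝 (0 : ℝ)) (𝓝 xs) := by
    have : Continuous p := by
      apply continuous_pi
      intro i
      exact continuous_const.add (continuous_id.mul continuous_const)
    simpa [hp0] using this.tendsto 0
  have Emin : ∀ᶠ t in 𝓝 (0 : ℝ), g xs ≤ g (p t) := hcont.eventually hmin
  have Ekey : ∀ᶠ t in 𝓝 (0 : ℝ), 0 ≤ t * (g y - g xs) := by
    filter_upwards [Eaff, Emin] with t h1 h2
    rw [h1] at h2
    linarith
  -- conclude the slope is zero
  have hpos : 0 ≤ g y - g xs := by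
    have := (Ekey.filter_mono (nhdsWithin_le_nhds (s := Set.Ioi (0 : ℝ)))).and
      (eventually_mem_nhdsWithin (a := (0 : ℝ)) (s := Set.Ioi (0 : ℝ)))
    obtain ⟨t, ht1, ht2⟩ := this.exists
    exact nonneg_of_mul_nonneg_right (by linarith [ht1]) ht2
  have hneg : g y - g xs ≤ 0 := by
    have := (Ekey.filter_mono (nhdsWithin_le_nhds (s := Set.Iio (0 : ℝ)))).and
      (eventually_mem_nhdsWithin (a := (0 : ℝ)) (s := Set.Iio (0 : ℝ)))
    obtain ⟨t, ht1, ht2⟩ := this.exists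
    have ht2' : t < 0 := ht2
    nlinarith [ht1]
  have : g y = g xs := by linarith
  simpa [hy] using this
end
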